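/- arXiv:1802.07366 — 6 statements merged into one kernel-verified Lean document; each statement's English description precedes it below -/
import Mathlib

section
/- Every Borel probability measure on a metric space has separable support, i.e. the support of the measure is a separable subspace of the metric space. -/
/-!
For `ε > 0`, a maximal `ε`-separated subset `N` of the support is an `ε`-net of it. The balls of
radius `ε / 2` centred at the points of `N` are pairwise disjoint, and have positive measure since
their centres lie in the support; a finite measure admits only countably many such balls, so `N` is
countable. Countable `ε`-nets for every `ε > 0` make the support separable.
-/

open MeasureTheory Filter Topology Set
open scoped ENNReal

noncomputable section

def msupport {X : Type*} [TopologicalSpace X] [MeasurableSpace X]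
    (μ : Measure X) : Set X :=
  {x | ∀ U : Set X, IsOpen U → x ∈ U → 0 < μ U}

open TopologicalSpace
open scoped NNReal

namespace Metric

variable {X : Type*} [PseudoEMetricSpace X]

theorem exists_maximal_isSeparated (ε : ℝ≥0∞) (s : Set X) :
    ∃ N, Maximal (fun N ↦ N ⊆ s ∧ IsSeparated ε N) N :=
  zorn_subset _ fun c hcs hc ↦
    ⟨⋃₀ c, ⟨sUnion_subset fun _ hN ↦ (hcs hN).1, (pairwise_sUnion hc.directedOn).2
      fun _ hN ↦ (hcs hN).2⟩, fun _ ↦ subset_sUnion_of_mem⟩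

theorem IsSeparated.pairwiseDisjoint_eball_half {ε : ℝ≥0∞} {N : Set X}
    (hN : IsSeparated ε N) : N.PairwiseDisjoint fun x ↦ eball x (ε / 2) :=
  fun _ hx _ hy hxy ↦ eball_disjoint <| (ENNReal.add_halves ε).trans_le (hN hx hy hxy).le

theorem isSeparable_of_forall_isSeparated_countable {s : Set X}
    (h : ∀ ε : ℝ≥0, 0 < ε → ∀ N ⊆ s, IsSeparated ε N → N.Countable) : IsSeparable s := by
  suffices ∀ ε > 0, ∃ t : Set X, t.Countable ∧ s ⊆ ⋃ x ∈ t, closedEBall x ε by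
    obtain ⟨t, -, htc, hst⟩ := EMetric.subset_countable_closure_of_almost_dense_set s this
    exact ⟨t, htc, hst⟩
  intro ε hε
  obtain ⟨δ, hδ, hδε⟩ := ENNReal.lt_iff_exists_nnreal_btwn.1 hε
  obtain ⟨N, hN⟩ := exists_maximal_isSeparated δ s
  refine ⟨N, h δ (mod_cast hδ) N hN.prop.1 hN.prop.2, ?_⟩
  calc s ⊆ ⋃ x ∈ N, closedEBall x δ :=
        isCover_iff_subset_iUnion_closedEBall.1 (IsCover.of_maximal_isSeparated hN)
    _ ⊆ ⋃ x ∈ N, closedEBall x ε :=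
        iUnion₂_mono fun x _ ↦ closedEBall_subset_closedEBall hδε.le

end Metric

namespace MeasureTheory.Measure

variable {α ι : Type*} [MeasurableSpace α] {μ : Measure α}

theorem countable_of_pairwiseDisjoint_of_measure_pos [SFinite μ] {s : Set ι} {f : ι → Set α}
    (hf : ∀ i ∈ s, MeasurableSet (f i)) (hd : s.PairwiseDisjoint f)
    (hpos : ∀ i ∈ s, 0 < μ (f i)) : s.Countable := by
  have hcount := countable_meas_pos_of_disjoint_iUnion (μ := μ) (As := fun i : s ↦ f i)
    (fun i ↦ hf i i.2) (hd.subtype _ _)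
  rw [eq_univ_of_forall (s := {i : s | 0 < μ (f i)}) fun i ↦ hpos i i.2,
    countable_univ_iff] at hcount
  exact countable_coe_iff.1 hcount

end MeasureTheory.Measure

/-- Every Borel probability measure on a metric space has separable support. -/
theorem support_of_probabilityMeasure_separable
    {X : Type*} [MetricSpace X] [MeasurableSpace X] [BorelSpace X]
    (μ : Measure X) [IsProbabilityMeasure μ] :
    TopologicalSpace.IsSeparable (msupport μ) := by
  refine Metric.isSeparable_of_forall_isSeparated_countable fun ε hε N hNS hN ↦ ?_
  refine Measure.countable_of_pairwiseDisjoint_of_measure_pos (μ := μ)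
    (fun _ _ ↦ measurableSet_eball) hN.pairwiseDisjoint_eball_half fun x hx ↦ ?_
  exact hNS hx _ Metric.isOpen_eball (Metric.mem_eball_self (ENNReal.half_pos (mod_cast hε.ne')))
end
end

section
/- Let X be a complete metric space and p ≥ 1. Then the finitely supported probability measures on X are dense in the metric space P_p(X) with the Wasserstein distance W_p: for every μ ∈ P_p(X) and every ε > 0 there is a Borel probability measure α on X with finite support such that W_p(μ, α) ≤ ε. -/
open MeasureTheory Filter Topology
open scoped ENNReal

noncomputable section

/-- `γ` is a coupling of `μ` and `ν`: its marginals along the two projections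
are `μ` and `ν` respectively. -/
def IsCoupling {X : Type*} [MeasurableSpace X]
    (γ : Measure (X × X)) (μ ν : Measure X) : Prop :=
  Measure.map Prod.fst γ = μ ∧ Measure.map Prod.snd γ = ν

/-- A measure is Radon if every Borel set is compact inner regular for it. -/
def IsRadon {X : Type*} [TopologicalSpace X] [MeasurableSpace X]
    (μ : Measure X) : Prop :=
  ∀ B : Set X, MeasurableSet B →
    μ B = ⨆ (K : Set X) (_ : IsCompact K) (_ : K ⊆ B), μ K

/-- A measure has finite moment of order `p` if `∫ d(x₀, x)^p dμ(x) < ∞` for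
some (equivalently, by the triangle inequality, every) point `x₀`. -/
def HasFiniteMoment {X : Type*} [PseudoEMetricSpace X] [MeasurableSpace X]
    (p : ℝ) (μ : Measure X) : Prop :=
  ∃ x₀ : X, ∫⁻ x, edist x₀ x ^ p ∂μ ≠ ⊤

/-- The Wasserstein distance of order `p`:
`W_p(μ, ν) = (inf_γ ∫ d(x, y)^p dγ(x, y))^{1/p}`, the infimum taken over
couplings `γ` of `μ` and `ν`. -/
def Wp {X : Type*} [PseudoEMetricSpace X] [MeasurableSpace X]
    (p : ℝ) (μ ν : Measure X) : ℝ≥0∞ :=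
  (⨅ (γ : Measure (X × X)) (_ : IsCoupling γ μ ν), ∫⁻ z, edist z.1 z.2 ^ p ∂γ) ^ (1 / p)

/-- Membership in `P_p(X)`: a Radon probability measure with finite moment of
order `p`. -/
def InPp {X : Type*} [MetricSpace X] [MeasurableSpace X] (p : ℝ) (μ : Measure X) : Prop :=
  IsProbabilityMeasure μ ∧ IsRadon μ ∧ HasFiniteMoment p μ

/-! A Radon probability measure is concentrated on a σ-compact, hence separable, set `s`.
The simple functions `SimpleFunc.approxOn id` with values in `insert x₀ s` converge to the
identity on `s` and never move a point further than `x₀` is from it, so by dominated convergence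
against the moment `d(x₀, x)^p` some such `T` has `∫ d(x, T x)^p dμ ≤ ε^p`. The push-forward
`T_* μ` is finitely supported, and `(id, T)_* μ` couples it with `μ` at that cost. -/

open Set TopologicalSpace

lemma IsRadon.innerRegular {X : Type*} [TopologicalSpace X] [MeasurableSpace X]
    {μ : Measure X} (hμ : IsRadon μ) : μ.InnerRegular where
  innerRegular B hB r hr := by
    rw [hμ B hB] at hr
    simpa only [lt_iSup_iff, exists_prop, and_assoc, and_left_comm] using hr

lemma exists_isSeparable_ae_mem {X : Type*} [MetricSpace X] [MeasurableSpace X]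
    [OpensMeasurableSpace X] (μ : Measure X) [IsFiniteMeasure μ] [μ.InnerRegularCompactLTTop] :
    ∃ s : Set X, IsSeparable s ∧ ∀ᵐ x ∂μ, x ∈ s := by
  have hK (n : ℕ) : ∃ K, IsCompact K ∧ μ Kᶜ < (n : ℝ≥0∞)⁻¹ := by
    obtain ⟨K, -, hK, hμK⟩ := MeasurableSet.univ.exists_isCompact_sdiff_lt (μ := μ)
      (measure_ne_top μ univ) (ENNReal.inv_ne_zero.2 (ENNReal.natCast_ne_top n))
    exact ⟨K, hK, by rwa [← compl_eq_univ_sdiff] at hμK⟩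
  choose K hKc hKμ using hK
  refine ⟨⋃ n, K n, .iUnion fun n => (hKc n).isSeparable, ?_⟩
  rw [ae_iff]
  by_contra hne
  obtain ⟨n, hn⟩ := ENNReal.exists_inv_nat_lt hne
  refine (measure_mono ?_).not_gt ((hKμ n).trans hn)
  exact fun x hx hxK => hx (mem_iUnion_of_mem n hxK)

lemma exists_simpleFunc_tendsto_lintegral_edist_rpow {X : Type*} [PseudoEMetricSpace X]
    [MeasurableSpace X] [OpensMeasurableSpace X] {μ : Measure X} {s : Set X}
    (hs : IsSeparable s) (hμs : ∀ᵐ x ∂μ, x ∈ s) {p : ℝ} (hp : 0 < p) {x₀ : X}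
    (hmom : ∫⁻ x, edist x₀ x ^ p ∂μ ≠ ∞) :
    ∃ T : ℕ → SimpleFunc X X,
      Tendsto (fun n => ∫⁻ x, edist x (T n x) ^ p ∂μ) atTop (𝓝 0) := by
  have : SeparableSpace (insert x₀ s : Set X) :=
    ((countable_singleton x₀).isSeparable.union hs).separableSpace
  let T := SimpleFunc.approxOn id measurable_id (insert x₀ s) x₀ (mem_insert x₀ s)
  refine ⟨T, ?_⟩
  have hmeas (n : ℕ) : Measurable fun x => edist x (T n x) ^ p :=
    (T n).measurable_bind (fun y x => edist x y ^ p) fun y =>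
      (ENNReal.continuous_rpow_const.comp (continuous_id.edist continuous_const)).measurable
  have hbound (n : ℕ) : ∀ᵐ x ∂μ, edist x (T n x) ^ p ≤ edist x₀ x ^ p := by
    refine .of_forall fun x => ?_
    rw [edist_comm]
    exact ENNReal.rpow_le_rpow (SimpleFunc.edist_approxOn_le measurable_id _ x n) hp.le
  have hlim : ∀ᵐ x ∂μ, Tendsto (fun n => edist x (T n x) ^ p) atTop (𝓝 0) := by
    filter_upwards [hμs] with x hx
    have hTx : Tendsto (fun n => T n x) atTop (𝓝 x) :=
      SimpleFunc.tendsto_approxOn measurable_id _ (subset_closure (mem_insert_of_mem x₀ hx))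
    have hdist : Tendsto (fun n => edist x (T n x)) atTop (𝓝 0) := by
      simpa only [edist_comm] using (tendsto_iff_edist_tendsto_0.1 hTx)
    simpa [Function.comp_def, ENNReal.zero_rpow_of_pos hp] using
      ((ENNReal.continuous_rpow_const (y := p)).tendsto 0).comp hdist
  simpa using tendsto_lintegral_of_dominated_convergence _ hmeas hbound hmom hlim

lemma Wp_map_le {X : Type*} [PseudoEMetricSpace X] [MeasurableSpace X] {p : ℝ} (hp : 0 ≤ p)
    (μ : Measure X) {f : X → X} (hf : Measurable f) :
    Wp p μ (μ.map f) ≤ (∫⁻ x, edist x (f x) ^ p ∂μ) ^ (1 / p) := by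
  have hgraph : Measurable fun x => (x, f x) := measurable_id.prodMk hf
  have hcoupling : IsCoupling (μ.map fun x => (x, f x)) μ (μ.map f) := by
    constructor <;> rw [Measure.map_map (by fun_prop) hgraph]
    exacts [Measure.map_id, rfl]
  refine ENNReal.rpow_le_rpow ?_ (by positivity)
  exact (iInf₂_le (μ.map fun x => (x, f x)) hcoupling).trans (lintegral_map_le _ _)

lemma msupport_subset_of_measure_compl_eq_zero {X : Type*} [TopologicalSpace X]
    [MeasurableSpace X] {μ : Measure X} {s : Set X} (hs : IsClosed s) (hμs : μ sᶜ = 0) :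
    msupport μ ⊆ s :=
  fun _ hx => by_contra fun hxs => (hx sᶜ hs.isOpen_compl hxs).ne' hμs

lemma MeasureTheory.SimpleFunc.msupport_map_finite {X Y : Type*} [MeasurableSpace X]
    [TopologicalSpace Y] [T1Space Y] [MeasurableSpace Y] [OpensMeasurableSpace Y]
    (μ : Measure X) (f : SimpleFunc X Y) :
    (msupport (μ.map f)).Finite := by
  have hclosed : IsClosed (range f) := f.finite_range.isClosed
  refine f.finite_range.subset (msupport_subset_of_measure_compl_eq_zero hclosed ?_)
  rw [Measure.map_apply f.measurable hclosed.measurableSet.compl]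
  simp

theorem finitely_supported_dense_general
    {X : Type*} [MetricSpace X] [MeasurableSpace X] [BorelSpace X]
    {p : ℝ} (hp : 1 ≤ p)
    (μ : Measure X) (hμ : InPp p μ) (ε : ℝ) (hε : 0 < ε) :
    ∃ α : Measure X, IsProbabilityMeasure α ∧ (msupport α).Finite ∧
      Wp p μ α ≤ ENNReal.ofReal ε := by
  obtain ⟨hprob, hRadon, x₀, hmom⟩ := hμ
  have := hRadon.innerRegular
  have hp₀ : 0 < p := zero_lt_one.trans_le hp
  obtain ⟨s, hs, hμs⟩ := exists_isSeparable_ae_mem μ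
  obtain ⟨T, hT⟩ := exists_simpleFunc_tendsto_lintegral_edist_rpow hs hμs hp₀ hmom
  have hεp : 0 < ENNReal.ofReal ε ^ p :=
    ENNReal.rpow_pos (ENNReal.ofReal_pos.2 hε) ENNReal.ofReal_ne_top
  obtain ⟨n, hn⟩ := (hT.eventually (ge_mem_nhds hεp)).exists
  refine ⟨μ.map (T n), Measure.isProbabilityMeasure_map (T n).measurable.aemeasurable,
    (T n).msupport_map_finite μ, ?_⟩
  calc Wp p μ (μ.map (T n))
      ≤ (∫⁻ x, edist x (T n x) ^ p ∂μ) ^ (1 / p) := Wp_map_le hp₀.le μ (T n).measurable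
    _ ≤ (ENNReal.ofReal ε ^ p) ^ (1 / p) := ENNReal.rpow_le_rpow hn (by positivity)
    _ = ENNReal.ofReal ε := by
      rw [← ENNReal.rpow_mul, mul_one_div_cancel hp₀.ne', ENNReal.rpow_one]

/-- The finitely supported probability measures are dense in `(P_p(X), W_p)`
for a complete metric space `X`. -/
theorem finitely_supported_dense
    {X : Type*} [MetricSpace X] [CompleteSpace X] [MeasurableSpace X] [BorelSpace X]
    {p : ℝ} (hp : 1 ≤ p)
    (μ : Measure X) (hμ : InPp p μ) (ε : ℝ) (hε : 0 < ε) :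
    ∃ α : Measure X, IsProbabilityMeasure α ∧ (msupport α).Finite ∧
      Wp p μ α ≤ ENNReal.ofReal ε :=
  finitely_supported_dense_general hp μ hμ ε hε
end
end

section
/- Let X be a complete metric space, p ≥ 1, and let μ_i (i ≥ 0) and μ be Radon probability measures on X with finite moments of order p. For any x₀ ∈ X, the following two conditions are equivalent, and whether they hold does not depend on the choice of x₀: (1) μ_i converges weakly to μ and ∫ d(x₀, x)^p dμ_i(x) → ∫ d(x₀, x)^p dμ(x); (2) for every continuous function f : X → ℝ for which there exists c ∈ ℝ with |f(x)| ≤ c(1 + d(x₀, x)^p) for all x ∈ X, one has ∫ f dμ_i → ∫ f dμ. -/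
open MeasureTheory Filter Topology
open scoped ENNReal

noncomputable section

/-- Weak convergence of a sequence of measures: `∫ f dμ_i → ∫ f dμ` for every
bounded continuous real-valued `f`. -/
def WeaklyTendsto {X : Type*} [TopologicalSpace X] [MeasurableSpace X]
    (μs : ℕ → Measure X) (μ : Measure X) : Prop :=
  ∀ f : BoundedContinuousFunction X ℝ,
    Tendsto (fun n => ∫ x, f x ∂(μs n)) atTop (𝓝 (∫ x, f x ∂μ))

/-- Convergence of the `p`-th moments about `x₀`. -/
def MomentTendsto {X : Type*} [MetricSpace X] [MeasurableSpace X] (p : ℝ)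
    (μs : ℕ → Measure X) (μ : Measure X) (x₀ : X) : Prop :=
  Tendsto (fun n => ∫ x, dist x₀ x ^ p ∂(μs n)) atTop (𝓝 (∫ x, dist x₀ x ^ p ∂μ))

/-- Convergence of integrals against all continuous functions of growth at most
`c·(1 + d(x₀, x)^p)`. -/
def GrowthTendsto {X : Type*} [MetricSpace X] [MeasurableSpace X] (p : ℝ)
    (μs : ℕ → Measure X) (μ : Measure X) (x₀ : X) : Prop :=
  ∀ f : X → ℝ, Continuous f →
    (∃ c : ℝ, ∀ x : X, |f x| ≤ c * (1 + dist x₀ x ^ p)) →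
    Tendsto (fun n => ∫ x, f x ∂(μs n)) atTop (𝓝 (∫ x, f x ∂μ))


section PpAux
variable {X : Type*} [MetricSpace X] [MeasurableSpace X] [BorelSpace X] {p : ℝ}

omit [MeasurableSpace X] [BorelSpace X] in
lemma Pp.w_cont (hp : 1 ≤ p) (x₀ : X) : Continuous fun x : X => dist x₀ x ^ p :=
  (continuous_const.dist continuous_id).rpow_const fun _ => Or.inr (by linarith)

omit [MeasurableSpace X] [BorelSpace X] in
lemma Pp.w_nonneg (p : ℝ) (x₀ x : X) : 0 ≤ dist x₀ x ^ p := Real.rpow_nonneg dist_nonneg p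

lemma Pp.real_add_rpow_le (hp : 0 ≤ p) {a b : ℝ} (ha : 0 ≤ a) (hb : 0 ≤ b) :
    (a + b) ^ p ≤ 2 ^ p * (a ^ p + b ^ p) := by
  have hm : 0 ≤ max a b := le_max_of_le_left ha
  have h1 : (a + b) ^ p ≤ (2 * max a b) ^ p := by
    apply Real.rpow_le_rpow (by linarith)
    · rcases le_total a b with h | h
      · rw [max_eq_right h]; linarith
      · rw [max_eq_left h]; linarith
    · exact hp
  have h2 : (2 * max a b : ℝ) ^ p = 2 ^ p * (max a b) ^ p :=
    Real.mul_rpow (by norm_num) hm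
  have h3 : (max a b) ^ p ≤ a ^ p + b ^ p := by
    rcases le_total a b with h | h
    · rw [max_eq_right h]
      have := Real.rpow_nonneg ha p; linarith
    · rw [max_eq_left h]
      have := Real.rpow_nonneg hb p; linarith
  have h2p : (0:ℝ) ≤ 2 ^ p := Real.rpow_nonneg (by norm_num) p
  calc (a + b) ^ p ≤ 2 ^ p * (max a b) ^ p := h2 ▸ h1
    _ ≤ 2 ^ p * (a ^ p + b ^ p) := by nlinarith

lemma Pp.ennreal_add_rpow_le (hp : 0 ≤ p) (a b : ℝ≥0∞) :
    (a + b) ^ p ≤ 2 ^ p * (a ^ p + b ^ p) := by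
  have h1 : a + b ≤ 2 * max a b := by
    rcases le_total a b with h | h
    · rw [max_eq_right h, two_mul]; exact add_le_add h le_rfl
    · rw [max_eq_left h, two_mul]; exact add_le_add le_rfl h
  calc (a + b) ^ p ≤ (2 * max a b) ^ p := ENNReal.rpow_le_rpow h1 hp
    _ = 2 ^ p * (max a b) ^ p := ENNReal.mul_rpow_of_nonneg _ _ hp
    _ ≤ 2 ^ p * (a ^ p + b ^ p) := by
        gcongr
        rcases le_total a b with h | h
        · rw [max_eq_right h]; exact le_add_self
        · rw [max_eq_left h]; exact le_add_right le_rfl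

lemma Pp.moment_finite_all (hp : 1 ≤ p) {μ : Measure X} [IsProbabilityMeasure μ]
    (h : HasFiniteMoment p μ) (x₀ : X) : ∫⁻ x, edist x₀ x ^ p ∂μ ≠ ⊤ := by
  have hp0 : (0:ℝ) ≤ p := by linarith
  obtain ⟨x₁, hx₁⟩ := h
  have key : ∀ x : X, edist x₀ x ^ p ≤ 2 ^ p * (edist x₀ x₁ ^ p + edist x₁ x ^ p) := by
    intro x
    calc edist x₀ x ^ p ≤ (edist x₀ x₁ + edist x₁ x) ^ p :=
          ENNReal.rpow_le_rpow (edist_triangle _ _ _) hp0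
      _ ≤ _ := Pp.ennreal_add_rpow_le hp0 _ _
  have hle : ∫⁻ x, edist x₀ x ^ p ∂μ ≤
      ∫⁻ x, 2 ^ p * (edist x₀ x₁ ^ p + edist x₁ x ^ p) ∂μ := lintegral_mono key
  refine ne_top_of_le_ne_top ?_ hle
  rw [lintegral_const_mul''] ; swap
  · have m1 : Measurable fun x : X => edist x₁ x ^ p :=
      (ENNReal.continuous_rpow_const.comp (continuous_const.edist continuous_id)).measurable
    exact (measurable_const.add m1).aemeasurable
  rw [lintegral_add_left measurable_const, lintegral_const]
  apply ENNReal.mul_ne_top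
  · exact (ENNReal.rpow_lt_top_of_nonneg hp0 (by norm_num)).ne
  · apply ENNReal.add_ne_top.2
    constructor
    · exact ENNReal.mul_ne_top (ENNReal.rpow_lt_top_of_nonneg hp0 (edist_ne_top _ _)).ne
        (by simp)
    · exact hx₁

lemma Pp.integrable_w (hp : 1 ≤ p) {μ : Measure X} [IsProbabilityMeasure μ]
    (h : HasFiniteMoment p μ) (x₀ : X) : Integrable (fun x => dist x₀ x ^ p) μ := by
  have hp0 : (0:ℝ) ≤ p := by linarith
  refine ⟨(Pp.w_cont hp x₀).aestronglyMeasurable, ?_⟩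
  rw [hasFiniteIntegral_iff_ofReal (ae_of_all _ (Pp.w_nonneg p x₀))]
  have heq : ∀ x : X, ENNReal.ofReal (dist x₀ x ^ p) = edist x₀ x ^ p := by
    intro x
    rw [← ENNReal.ofReal_rpow_of_nonneg dist_nonneg hp0, ← edist_dist]
  simp_rw [heq]
  exact (Pp.moment_finite_all hp h x₀).lt_top

lemma Pp.integrable_growth (hp : 1 ≤ p) {μ : Measure X} [IsProbabilityMeasure μ]
    (h : HasFiniteMoment p μ) (x₀ : X) {f : X → ℝ} (hf : Continuous f) {c : ℝ}
    (hc : ∀ x, |f x| ≤ c * (1 + dist x₀ x ^ p)) : Integrable f μ := by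
  have hw := Pp.integrable_w hp h x₀
  refine Integrable.mono' ((integrable_const c).add (hw.const_mul c))
    hf.aestronglyMeasurable (ae_of_all _ fun x => ?_)
  rw [Real.norm_eq_abs]
  have h1 := hc x
  simp only [Pi.add_apply]
  ring_nf
  ring_nf at h1
  linarith [h1]

omit [MeasurableSpace X] [BorelSpace X] in
lemma Pp.growth_bound_change (hp : 1 ≤ p) (x₀ x₁ : X) {f : X → ℝ} {c : ℝ}
    (hc : ∀ x, |f x| ≤ c * (1 + dist x₁ x ^ p)) :
    ∃ c' : ℝ, ∀ x, |f x| ≤ c' * (1 + dist x₀ x ^ p) := by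
  have hp0 : (0:ℝ) ≤ p := by linarith
  have hc0 : 0 ≤ c := by
    have h := hc x₁
    rw [dist_self, Real.zero_rpow (by linarith : p ≠ 0)] at h
    nlinarith [abs_nonneg (f x₁)]
  refine ⟨c * (1 + 2 ^ p * dist x₁ x₀ ^ p + 2 ^ p), fun x => ?_⟩
  have h1 : dist x₁ x ^ p ≤ 2 ^ p * (dist x₁ x₀ ^ p + dist x₀ x ^ p) :=
    calc dist x₁ x ^ p ≤ (dist x₁ x₀ + dist x₀ x) ^ p :=
          Real.rpow_le_rpow dist_nonneg (dist_triangle _ _ _) hp0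
      _ ≤ _ := Pp.real_add_rpow_le hp0 dist_nonneg dist_nonneg
  have h2 := hc x
  have h2p : (0:ℝ) < 2 ^ p := Real.rpow_pos_of_pos two_pos p
  have w0 := Pp.w_nonneg p x₀ x
  have w1 := Pp.w_nonneg p x₁ x₀
  nlinarith [mul_nonneg hc0 w0, mul_nonneg (mul_nonneg hc0 h2p.le) (mul_nonneg w1 w0),
    mul_nonneg (mul_nonneg hc0 h2p.le) w0, mul_nonneg (mul_nonneg hc0 h2p.le) w1]

lemma Pp.forward_aux (hp : 1 ≤ p) (μs : ℕ → Measure X) (μ : Measure X)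
    (hμs : ∀ n, IsProbabilityMeasure (μs n) ∧ HasFiniteMoment p (μs n))
    (hμp : IsProbabilityMeasure μ) (hμm : HasFiniteMoment p μ)
    (x₀ : X) (hwk : WeaklyTendsto μs μ)
    (hmo : Tendsto (fun n => ∫ x, dist x₀ x ^ p ∂(μs n)) atTop
      (𝓝 (∫ x, dist x₀ x ^ p ∂μ)))
    (f : X → ℝ) (hf : Continuous f)
    (hcex : ∃ c : ℝ, ∀ x : X, |f x| ≤ c * (1 + dist x₀ x ^ p)) :
    Tendsto (fun n => ∫ x, f x ∂(μs n)) atTop (𝓝 (∫ x, f x ∂μ)) := by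
  haveI := hμp
  obtain ⟨c, hc⟩ := hcex
  set w : X → ℝ := fun x => dist x₀ x ^ p with hwdef
  have hwc : Continuous w := Pp.w_cont hp x₀
  have hw0 : ∀ x, 0 ≤ w x := Pp.w_nonneg p x₀
  have hc0 : 0 ≤ c := by
    have h := hc x₀
    rw [dist_self, Real.zero_rpow (by linarith : p ≠ 0)] at h
    nlinarith [abs_nonneg (f x₀)]
  set c' := c + 1 with hc'def
  have hc'1 : (1:ℝ) ≤ c' := by simp [hc'def]; linarith
  have hfb : ∀ x, |f x| ≤ c' * (1 + w x) := fun x => by nlinarith [hc x, hw0 x]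
  have hintf : Integrable f μ := Pp.integrable_growth hp hμm x₀ hf hc
  have hintfn : ∀ n, Integrable f (μs n) := fun n => by
    haveI := (hμs n).1; exact Pp.integrable_growth hp (hμs n).2 x₀ hf hc
  have hintw : Integrable w μ := Pp.integrable_w hp hμm x₀
  have hintwn : ∀ n, Integrable w (μs n) := fun n => by
    haveI := (hμs n).1; exact Pp.integrable_w hp (hμs n).2 x₀
  rw [Metric.tendsto_atTop]
  intro ε hε
  set ε' := ε / (32 * c') with hε'def
  have hε'pos : 0 < ε' := div_pos hε (by linarith)
  have hDC : Tendsto (fun R : ℕ => ∫ x, (w x - min (w x) R) ∂μ) atTop (𝓝 0) := by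
    have h0 : (0:ℝ) = ∫ x, (0:ℝ) ∂μ := by simp
    rw [h0]
    apply tendsto_integral_of_dominated_convergence w
    · intro n; exact (hwc.sub (hwc.min continuous_const)).aestronglyMeasurable
    · exact hintw
    · intro n
      apply ae_of_all; intro x
      rw [Real.norm_eq_abs, abs_of_nonneg (by simp [min_le_left])]
      have : (0:ℝ) ≤ min (w x) n := le_min (hw0 x) (by positivity)
      linarith
    · apply ae_of_all; intro x
      apply Tendsto.congr' _ tendsto_const_nhds
      filter_upwards [eventually_ge_atTop ⌈w x⌉₊] with n hn
      have : w x ≤ (n:ℝ) := (Nat.le_ceil _).trans (by exact_mod_cast hn)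
      simp [min_eq_left this]
  obtain ⟨R, hR2, hR1⟩ := ((hDC.eventually_lt_const hε'pos).and (eventually_ge_atTop 1)).exists
  have hR1' : (1:ℝ) ≤ (R:ℝ) := by exact_mod_cast hR1
  set Rr : ℝ := (R:ℝ) with hRrdef
  set M := 4 * c' * Rr with hMdef
  have hM0 : 0 ≤ M := by nlinarith
  set fM : X → ℝ := fun x => max (-M) (min (f x) M) with hfMdef
  have hfMc : Continuous fM := continuous_const.max (hf.min continuous_const)
  have hfMb : ∀ x, ‖fM x‖ ≤ M := by
    intro x; rw [Real.norm_eq_abs, abs_le]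
    exact ⟨le_max_left _ _, max_le (by linarith) (min_le_right _ _)⟩
  have hpt : ∀ x, |f x - fM x| ≤ 8 * c' * (w x - min (w x) Rr) := by
    intro x
    rcases le_or_gt (w x) (2 * Rr) with hcase | hcase
    · have hfsmall : |f x| ≤ M := by
        have := hfb x
        rw [hMdef]; nlinarith
      have heq : fM x = f x := by
        rw [hfMdef]
        simp only
        rw [min_eq_left (abs_le.1 hfsmall).2, max_eq_right (abs_le.1 hfsmall).1]
      rw [heq, sub_self, abs_zero]
      have h1 : min (w x) Rr ≤ w x := min_le_left _ _
      nlinarith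
    · have hmin : min (w x) Rr = Rr := min_eq_right (by linarith)
      rw [hmin]
      have h1 : |f x - fM x| ≤ |f x| + |fM x| := by
        rw [sub_eq_add_neg]
        exact (abs_add_le _ _).trans (by rw [abs_neg])
      have h2 := hfMb x
      rw [Real.norm_eq_abs] at h2
      have h3 := hfb x
      nlinarith
  have key : ∀ (ν : Measure X), IsProbabilityMeasure ν → Integrable f ν → Integrable w ν →
      |∫ x, f x ∂ν - ∫ x, fM x ∂ν| ≤
        8 * c' * (∫ x, w x ∂ν - ∫ x, min (w x) Rr ∂ν) := by
    intro ν hν hfν hwν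
    haveI := hν
    have hfMν : Integrable fM ν :=
      Integrable.mono' (integrable_const M) hfMc.aestronglyMeasurable (ae_of_all _ hfMb)
    have hminν : Integrable (fun x => min (w x) Rr) ν := by
      refine Integrable.mono' hwν ((hwc.min continuous_const).aestronglyMeasurable)
        (ae_of_all _ fun x => ?_)
      rw [Real.norm_eq_abs, abs_of_nonneg (le_min (hw0 x) (by linarith))]
      exact min_le_left _ _
    calc |∫ x, f x ∂ν - ∫ x, fM x ∂ν| = |∫ x, (f x - fM x) ∂ν| := by
            rw [integral_sub hfν hfMν]
      _ ≤ ∫ x, |f x - fM x| ∂ν := by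
            simpa [Real.norm_eq_abs] using
              norm_integral_le_integral_norm (fun x => f x - fM x) (μ := ν)
      _ ≤ ∫ x, 8 * c' * (w x - min (w x) Rr) ∂ν :=
            integral_mono (hfν.sub hfMν).abs ((hwν.sub hminν).const_mul _) hpt
      _ = 8 * c' * (∫ x, w x ∂ν - ∫ x, min (w x) Rr ∂ν) := by
            rw [integral_const_mul, integral_sub hwν hminν]
  have hminμ : Integrable (fun x => min (w x) Rr) μ := by
    refine Integrable.mono' hintw ((hwc.min continuous_const).aestronglyMeasurable)
      (ae_of_all _ fun x => ?_)
    rw [Real.norm_eq_abs, abs_of_nonneg (le_min (hw0 x) (by linarith))]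
    exact min_le_left _ _
  have hminb : ∀ x, ‖min (w x) Rr‖ ≤ Rr := fun x => by
    rw [Real.norm_eq_abs, abs_of_nonneg (le_min (hw0 x) (by linarith))]
    exact min_le_right _ _
  have hmid : Tendsto (fun n => ∫ x, fM x ∂μs n) atTop (𝓝 (∫ x, fM x ∂μ)) := by
    have := hwk (BoundedContinuousFunction.ofNormedAddCommGroup fM hfMc M hfMb)
    simpa [BoundedContinuousFunction.coe_ofNormedAddCommGroup] using this
  have hminlim : Tendsto (fun n => ∫ x, min (w x) Rr ∂μs n) atTop
      (𝓝 (∫ x, min (w x) Rr ∂μ)) := by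
    have := hwk (BoundedContinuousFunction.ofNormedAddCommGroup _
      (hwc.min continuous_const) Rr hminb)
    simpa [BoundedContinuousFunction.coe_ofNormedAddCommGroup] using this
  have hD : Tendsto (fun n => ∫ x, w x ∂μs n - ∫ x, min (w x) Rr ∂μs n) atTop
      (𝓝 (∫ x, w x ∂μ - ∫ x, min (w x) Rr ∂μ)) := hmo.sub hminlim
  have hDinf : ∫ x, w x ∂μ - ∫ x, min (w x) Rr ∂μ < ε' := by
    rw [← integral_sub hintw hminμ]
    exact hR2
  have hevD : ∀ᶠ n in atTop, ∫ x, w x ∂μs n - ∫ x, min (w x) Rr ∂μs n < ε' :=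
    hD.eventually_lt_const hDinf
  have hevmid : ∀ᶠ n in atTop, |∫ x, fM x ∂μs n - ∫ x, fM x ∂μ| < ε / 4 := by
    have h2 := hmid.sub (tendsto_const_nhds (x := ∫ x, fM x ∂μ))
    rw [sub_self] at h2
    have habs := h2.abs
    rw [abs_zero] at habs
    exact habs.eventually_lt_const (by linarith)
  obtain ⟨N, hN⟩ := eventually_atTop.1 (hevD.and hevmid)
  refine ⟨N, fun n hn => ?_⟩
  obtain ⟨h1, h2⟩ := hN n hn
  have k1 := key (μs n) (hμs n).1 (hintfn n) (hintwn n)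
  have k2 := key μ hμp hintf hintw
  rw [Real.dist_eq]
  have tri : |∫ x, f x ∂μs n - ∫ x, f x ∂μ| ≤
      |∫ x, f x ∂μs n - ∫ x, fM x ∂μs n| + |∫ x, fM x ∂μs n - ∫ x, fM x ∂μ|
        + |∫ x, fM x ∂μ - ∫ x, f x ∂μ| := by
    have t1 := abs_sub_le (∫ x, f x ∂μs n) (∫ x, fM x ∂μs n) (∫ x, f x ∂μ)
    have t2 := abs_sub_le (∫ x, fM x ∂μs n) (∫ x, fM x ∂μ) (∫ x, f x ∂μ)
    linarith
  have k2' : |∫ x, fM x ∂μ - ∫ x, f x ∂μ| ≤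
      8 * c' * (∫ x, w x ∂μ - ∫ x, min (w x) Rr ∂μ) := by
    rw [abs_sub_comm]; exact k2
  have hc'pos : (0:ℝ) < c' := by linarith
  have hee : 8 * c' * ε' = ε / 4 := by
    rw [hε'def]; field_simp; ring
  nlinarith [mul_lt_mul_of_pos_left h1 (by linarith : (0:ℝ) < 8 * c'),
    mul_lt_mul_of_pos_left hDinf (by linarith : (0:ℝ) < 8 * c')]

end PpAux

/-- For Radon probability measures with finite `p`-th moments on a complete
metric space, and any base point `x₀`: (1) weak convergence together with
convergence of `p`-th moments about `x₀` is equivalent to (2) convergence of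
integrals of all continuous functions of growth at most `c·(1 + d(x₀,x)^p)`;
moreover each of the two conditions is independent of the choice of `x₀`. -/
theorem weak_plus_moment_iff_growth
    {X : Type*} [MetricSpace X] [CompleteSpace X] [MeasurableSpace X] [BorelSpace X]
    {p : ℝ} (hp : 1 ≤ p)
    (μs : ℕ → Measure X) (μ : Measure X)
    (hμs : ∀ n, InPp p (μs n)) (hμ : InPp p μ) :
    (∀ x₀ : X,
      (WeaklyTendsto μs μ ∧ MomentTendsto p μs μ x₀) ↔ GrowthTendsto p μs μ x₀) ∧
    (∀ x₀ x₁ : X,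
      (WeaklyTendsto μs μ ∧ MomentTendsto p μs μ x₀) ↔
        (WeaklyTendsto μs μ ∧ MomentTendsto p μs μ x₁)) ∧
    (∀ x₀ x₁ : X, GrowthTendsto p μs μ x₀ ↔ GrowthTendsto p μs μ x₁) := by
  obtain ⟨hμ1, -, hμ3⟩ := hμ
  haveI := hμ1
  have hμs' : ∀ n, IsProbabilityMeasure (μs n) ∧ HasFiniteMoment p (μs n) :=
    fun n => ⟨(hμs n).1, (hμs n).2.2⟩
  have back : ∀ x₀ : X, GrowthTendsto p μs μ x₀ →
      WeaklyTendsto μs μ ∧ MomentTendsto p μs μ x₀ := by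
    intro x₀ h
    constructor
    · intro g
      apply h g g.continuous
      refine ⟨‖g‖, fun x => ?_⟩
      have h1 : |g x| ≤ ‖g‖ := by
        have := g.norm_coe_le_norm x; rwa [Real.norm_eq_abs] at this
      nlinarith [Pp.w_nonneg p x₀ x, norm_nonneg g]
    · refine h _ (Pp.w_cont hp x₀) ⟨1, fun x => ?_⟩
      rw [abs_of_nonneg (Pp.w_nonneg p x₀ x)]; linarith
  have fwd : ∀ x₀ : X, WeaklyTendsto μs μ → MomentTendsto p μs μ x₀ →
      GrowthTendsto p μs μ x₀ := fun x₀ hw hm f hf hc =>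
    Pp.forward_aux hp μs μ hμs' hμ1 hμ3 x₀ hw hm f hf hc
  have iff1 : ∀ x₀ : X,
      (WeaklyTendsto μs μ ∧ MomentTendsto p μs μ x₀) ↔ GrowthTendsto p μs μ x₀ :=
    fun x₀ => ⟨fun h => fwd x₀ h.1 h.2, back x₀⟩
  have step : ∀ x₀ x₁ : X, GrowthTendsto p μs μ x₀ → GrowthTendsto p μs μ x₁ := by
    intro x₀ x₁ h f hf hc
    obtain ⟨c, hcb⟩ := hc
    exact h f hf (Pp.growth_bound_change hp x₀ x₁ hcb)
  have iff3 : ∀ x₀ x₁ : X, GrowthTendsto p μs μ x₀ ↔ GrowthTendsto p μs μ x₁ :=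
    fun x₀ x₁ => ⟨step x₀ x₁, step x₁ x₀⟩
  exact ⟨iff1, fun x₀ x₁ => (iff1 x₀).trans ((iff3 x₀ x₁).trans (iff1 x₁).symm), iff3⟩
end
end

section
/- Let (A, d) be a metric space with binary operations +_r for r ∈ [0,1] forming a Wasserstein barycentric algebra of order p ≥ 1. Then for all x, y ∈ A and all r, s ∈ [0,1], d(x +_r y, x +_s y) ≤ d(x, y)·|r − s|^{1/p}; in particular, for fixed x and y, the map r ↦ x +_r y is (1/p)-Hölder continuous. -/
open scoped ENNReal

noncomputable section

/-- A Wasserstein barycentric algebra of order `p`: a metric space with binary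
convex-combination operations `+_r` for `r ∈ [0,1]` satisfying the barycentric
laws (B1), (B2), (SC), (SA) and the Wasserstein condition
`d(x +_r y, x' +_r y')^p ≤ r·d(x,x')^p + (1−r)·d(y,y')^p`. -/
structure WassersteinAlgebra (p : ℝ) (A : Type*) [MetricSpace A] where
  comb : ℝ → A → A → A
  b1 : ∀ x y : A, comb 1 x y = x
  b2 : ∀ r ∈ Set.Icc (0 : ℝ) 1, ∀ x : A, comb r x x = x
  sc : ∀ r ∈ Set.Icc (0 : ℝ) 1, ∀ x y : A, comb r x y = comb (1 - r) y x
  sa : ∀ q ∈ Set.Icc (0 : ℝ) 1, ∀ r ∈ Set.Icc (0 : ℝ) 1, q < 1 → r < 1 →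
    ∀ x y z : A,
      comb r (comb q x y) z = comb (q * r) x (comb ((r - q * r) / (1 - q * r)) y z)
  wass : ∀ r ∈ Set.Icc (0 : ℝ) 1, ∀ x x' y y' : A,
    dist (comb r x y) (comb r x' y') ^ p ≤ r * dist x x' ^ p + (1 - r) * dist y y' ^ p

/-- In a Wasserstein barycentric algebra of order `p`, for fixed `x, y` the map
`r ↦ x +_r y` is `1/p`-Hölder continuous:
`d(x +_r y, x +_s y) ≤ d(x, y)·|r − s|^{1/p}`. -/
theorem wassersteinAlgebra_holder_in_weight
    {p : ℝ} {A : Type*} [MetricSpace A] (hp : 1 ≤ p)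
    (W : WassersteinAlgebra p A)
    (x y : A) (r s : ℝ) (hr : r ∈ Set.Icc (0 : ℝ) 1) (hs : s ∈ Set.Icc (0 : ℝ) 1) :
    dist (W.comb r x y) (W.comb s x y) ≤ dist x y * |r - s| ^ (1 / p) := by
  have hp0 : (0:ℝ) < p := lt_of_lt_of_le one_pos hp
  have hd : (0:ℝ) ≤ dist x y := dist_nonneg
  -- Lemma A: dist x (comb t x y) ^ p ≤ (1 - t) * dist x y ^ p
  have lemA : ∀ t ∈ Set.Icc (0:ℝ) 1,
      dist x (W.comb t x y) ^ p ≤ (1 - t) * dist x y ^ p := by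
    intro t ht
    have h := W.wass t ht x x x y
    rwa [W.b2 t ht x, dist_self, Real.zero_rpow hp0.ne', mul_zero, zero_add] at h
  -- power estimate for s ≤ r
  have key : ∀ a ∈ Set.Icc (0:ℝ) 1, ∀ b ∈ Set.Icc (0:ℝ) 1, b ≤ a →
      dist (W.comb a x y) (W.comb b x y) ^ p ≤ (a - b) * dist x y ^ p := by
    intro a ha b hb hba
    rcases eq_or_lt_of_le ha.2 with ha1 | ha1
    · -- a = 1
      subst ha1
      rw [W.b1]
      exact lemA b hb
    rcases eq_or_lt_of_le hba with hab | hab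
    · subst hab
      rw [dist_self, Real.zero_rpow hp0.ne', sub_self, zero_mul]
    rcases eq_or_lt_of_le ha.1 with ha0 | ha0
    · exact absurd (hab.trans_le (ha0 ▸ hb.1)) (lt_irrefl b)
    -- 0 < a < 1, b < a
    set q : ℝ := b / a with hq
    have hqr : q * a = b := div_mul_cancel₀ b ha0.ne'
    have hq0 : 0 ≤ q := div_nonneg hb.1 ha.1
    have hq1 : q < 1 := (div_lt_one ha0).mpr hab
    have hqmem : q ∈ Set.Icc (0:ℝ) 1 := ⟨hq0, hq1.le⟩
    have hb1 : b < 1 := hab.trans_le ha.2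
    have humem : (a - q * a) / (1 - q * a) ∈ Set.Icc (0:ℝ) 1 := by
      rw [hqr]
      constructor
      · exact div_nonneg (by linarith) (by linarith)
      · rw [div_le_one (by linarith)]; linarith
    have hsa := W.sa q hqmem a ha hq1 ha1 x y y
    rw [W.b2 _ humem y, hqr] at hsa
    -- hsa : comb a (comb q x y) y = comb b x y
    have hw := W.wass a ha (W.comb q x y) x y y
    rw [hsa, dist_self, Real.zero_rpow hp0.ne', mul_zero, add_zero] at hw
    rw [dist_comm]
    calc dist (W.comb b x y) (W.comb a x y) ^ p ≤ a * dist (W.comb q x y) x ^ p := hw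
      _ ≤ a * ((1 - q) * dist x y ^ p) := by
          apply mul_le_mul_of_nonneg_left _ ha.1
          rw [dist_comm]
          exact lemA q hqmem
      _ = (a - b) * dist x y ^ p := by rw [← hqr]; ring
  have main : ∀ a ∈ Set.Icc (0:ℝ) 1, ∀ b ∈ Set.Icc (0:ℝ) 1, b ≤ a →
      dist (W.comb a x y) (W.comb b x y) ≤ dist x y * |a - b| ^ (1 / p) := by
    intro a ha b hb hba
    have h1 := key a ha b hb hba
    have hab0 : (0:ℝ) ≤ a - b := by linarith
    calc dist (W.comb a x y) (W.comb b x y)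
        = (dist (W.comb a x y) (W.comb b x y) ^ p) ^ (1 / p) := by
          rw [one_div, Real.rpow_rpow_inv dist_nonneg hp0.ne']
      _ ≤ ((a - b) * dist x y ^ p) ^ (1 / p) := by
          apply Real.rpow_le_rpow (Real.rpow_nonneg dist_nonneg p) h1
          positivity
      _ = dist x y * |a - b| ^ (1 / p) := by
          rw [Real.mul_rpow hab0 (Real.rpow_nonneg hd p), one_div,
            Real.rpow_rpow_inv hd hp0.ne', abs_of_nonneg hab0, mul_comm]
  rcases le_total s r with h | h
  · exact main r hr s hs h
  · rw [dist_comm, abs_sub_comm]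
    exact main s hs r hr h
end
end

section
/- Let (A, d) be a metric space with binary operations +_r for r ∈ [0,1] forming a Wasserstein barycentric algebra of order p ≥ 1. Then for all n ≥ 1, all r_1, …, r_n ∈ [0,1] with r_1 + ⋯ + r_n = 1, and all x_1, …, x_n, x'_1, …, x'_n ∈ A, the finite convex combinations satisfy d(∑_{i=1}^n r_i x_i, ∑_{i=1}^n r_i x'_i)^p ≤ ∑_{i=1}^n r_i · d(x_i, x'_i)^p. -/
open scoped ENNReal

noncomputable section

/-- The finite convex sum `∑ rᵢ xᵢ` in a barycentric algebra, defined
inductively: `∑_{i=1}^n rᵢ xᵢ = x₁ +_{r₁} ∑_{i=2}^n (rᵢ/(1−r₁)) xᵢ`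
(here the weight of the head is its weight relative to the total remaining
mass, which for weights summing to `1` agrees with the displayed formula). -/
def WassersteinAlgebra.convSum {p : ℝ} {A : Type*} [MetricSpace A]
    (W : WassersteinAlgebra p A) : ℝ × A → List (ℝ × A) → A
  | (_, x), [] => x
  | (r, x), t :: l =>
      W.comb (r / (r + t.1 + (l.map Prod.fst).sum)) x (W.convSum t l)

/-!
Multiplied by the total mass, the estimate is homogeneous in the weights, so it holds for all
nonnegative weights and can be proved by induction on the list. `convSum` splits off the head
with relative weight `r / (r + s)`, `s` the mass of the tail, and the Wasserstein condition for
that weight, multiplied by `r + s`, reads `(r + s) · d(…)^p ≤ r · d(x, x')^p + s · d(y, y')^p`;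
the induction hypothesis bounds the last term. No case split on a vanishing mass is needed:
when `r + s = 0` the junk weight `0 / 0 = 0` is multiplied by `0`.
-/

namespace WassersteinAlgebra

variable {p : ℝ} {A : Type*} [MetricSpace A] (W : WassersteinAlgebra p A)

theorem convSum_cons (r : ℝ) (x : A) (t : ℝ × A) (l : List (ℝ × A)) :
    W.convSum (r, x) (t :: l) =
      W.comb (r / (r + ((t :: l).map Prod.fst).sum)) x (W.convSum t l) := by
  rw [convSum, List.map_cons, List.sum_cons, add_assoc]

theorem add_mul_dist_comb_div_rpow_le {r s : ℝ} (hr : 0 ≤ r) (hs : 0 ≤ s) (x x' y y' : A) :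
    (r + s) * dist (W.comb (r / (r + s)) x y) (W.comb (r / (r + s)) x' y') ^ p ≤
      r * dist x x' ^ p + s * dist y y' ^ p := by
  have hrs : 0 ≤ r + s := add_nonneg hr hs
  have hw : r / (r + s) ∈ Set.Icc (0 : ℝ) 1 :=
    ⟨div_nonneg hr hrs, div_le_one_of_le₀ (le_add_of_nonneg_right hs) hrs⟩
  have hmass : (r + s) * (r / (r + s)) = r := mul_div_cancel_of_imp' fun h0 => by linarith
  calc (r + s) * dist (W.comb (r / (r + s)) x y) (W.comb (r / (r + s)) x' y') ^ p
      ≤ (r + s) * (r / (r + s) * dist x x' ^ p + (1 - r / (r + s)) * dist y y' ^ p) :=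
        mul_le_mul_of_nonneg_left (W.wass _ hw x x' y y') hrs
    _ = r * dist x x' ^ p + s * dist y y' ^ p := by
        rw [mul_add, ← mul_assoc, ← mul_assoc, mul_sub, mul_one, hmass]
        ring

theorem sum_fst_mul_dist_convSum_rpow_le (hd : ℝ × A × A) (tl : List (ℝ × A × A))
    (hw : ∀ e ∈ hd :: tl, 0 ≤ e.1) :
    ((hd :: tl).map Prod.fst).sum *
        dist (W.convSum (hd.1, hd.2.1) (tl.map fun e => (e.1, e.2.1)))
          (W.convSum (hd.1, hd.2.2) (tl.map fun e => (e.1, e.2.2))) ^ p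
      ≤ ((hd :: tl).map fun e => e.1 * dist e.2.1 e.2.2 ^ p).sum := by
  induction tl generalizing hd with
  | nil => simp [convSum]
  | cons t l ih =>
    have hmass_tail : 0 ≤ ((t :: l).map Prod.fst).sum :=
      List.sum_nonneg fun r hr => by
        obtain ⟨e, he, rfl⟩ := List.mem_map.mp hr
        exact hw e (List.mem_cons_of_mem _ he)
    have htail := ih t fun e he => hw e (List.mem_cons_of_mem _ he)
    have hunfold (i : A × A → A) :
        W.convSum (hd.1, i hd.2) ((t :: l).map fun e => (e.1, i e.2)) =
          W.comb (hd.1 / (hd.1 + ((t :: l).map Prod.fst).sum)) (i hd.2)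
            (W.convSum (t.1, i t.2) (l.map fun e => (e.1, i e.2))) := by
      rw [List.map_cons, convSum_cons, List.map_cons, List.map_map]
      rfl
    rw [hunfold Prod.fst, hunfold Prod.snd]
    calc (hd.1 + ((t :: l).map Prod.fst).sum) * _
        ≤ hd.1 * dist hd.2.1 hd.2.2 ^ p + ((t :: l).map Prod.fst).sum *
            dist (W.convSum (t.1, t.2.1) (l.map fun e => (e.1, e.2.1)))
              (W.convSum (t.1, t.2.2) (l.map fun e => (e.1, e.2.2))) ^ p :=
          W.add_mul_dist_comb_div_rpow_le (hw hd List.mem_cons_self) hmass_tail _ _ _ _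
      _ ≤ ((hd :: t :: l).map fun e => e.1 * dist e.2.1 e.2.2 ^ p).sum := by
          rw [List.map_cons, List.sum_cons]
          exact add_le_add le_rfl htail

end WassersteinAlgebra

theorem wassersteinAlgebra_convSum_estimate_general
    {p : ℝ} {A : Type*} [MetricSpace A]
    (W : WassersteinAlgebra p A)
    (hd : ℝ × A × A) (tl : List (ℝ × A × A))
    (hw : ∀ e ∈ hd :: tl, e.1 ∈ Set.Icc (0 : ℝ) 1)
    (hsum : ((hd :: tl).map Prod.fst).sum = 1) :
    dist (W.convSum (hd.1, hd.2.1) (tl.map fun e => (e.1, e.2.1)))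
        (W.convSum (hd.1, hd.2.2) (tl.map fun e => (e.1, e.2.2))) ^ p
      ≤ ((hd :: tl).map fun e => e.1 * dist e.2.1 e.2.2 ^ p).sum := by
  have h := W.sum_fst_mul_dist_convSum_rpow_le hd tl fun e he => (hw e he).1
  rwa [hsum, one_mul] at h

/-- The Wasserstein condition extends to finite convex combinations: for
weights `r₁, …, rₙ ∈ [0,1]` summing to `1`,
`d(∑ rᵢ xᵢ, ∑ rᵢ x'ᵢ)^p ≤ ∑ rᵢ · d(xᵢ, x'ᵢ)^p`. -/
theorem wassersteinAlgebra_convSum_estimate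
    {p : ℝ} {A : Type*} [MetricSpace A] (hp : 1 ≤ p)
    (W : WassersteinAlgebra p A)
    (hd : ℝ × A × A) (tl : List (ℝ × A × A))
    (hw : ∀ e ∈ hd :: tl, e.1 ∈ Set.Icc (0 : ℝ) 1)
    (hsum : ((hd :: tl).map Prod.fst).sum = 1) :
    dist (W.convSum (hd.1, hd.2.1) (tl.map fun e => (e.1, e.2.1)))
        (W.convSum (hd.1, hd.2.2) (tl.map fun e => (e.1, e.2.2))) ^ p
      ≤ ((hd :: tl).map fun e => e.1 * dist e.2.1 e.2.2 ^ p).sum :=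
  wassersteinAlgebra_convSum_estimate_general W hd tl hw hsum
end
end

section
/- Let X be a metric space and p ≥ 1. For all Radon probability measures μ, μ', ν, ν' on X with finite moments of order p and all r ∈ [0,1], the pointwise convex combinations satisfy W_p(μ +_r ν, μ' +_r ν')^p ≤ r·W_p(μ, μ')^p + (1−r)·W_p(ν, ν')^p. Consequently P_p(X), with the standard binary convex combination operations, forms a Wasserstein barycentric algebra of order p. -/
open MeasureTheory Filter Topology
open scoped ENNReal

noncomputable section

/-- The standard pointwise convex combination of measures:
`(μ +_r ν)(B) = r·μ(B) + (1 − r)·ν(B)`. -/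
def mcomb {X : Type*} [MeasurableSpace X] (r : ℝ) (μ ν : Measure X) : Measure X :=
  ENNReal.ofReal r • μ + ENNReal.ofReal (1 - r) • ν

/-!
If `γ₁` couples `μ` with `μ'` and `γ₂` couples `ν` with `ν'`, then `γ₁ +_r γ₂` couples
`μ +_r ν` with `μ' +_r ν'`, and its transport cost is `r` times that of `γ₁` plus `1 - r` times
that of `γ₂`, because `∫⁻ c dγ` is linear in `γ`. Taking infima over `γ₁` and `γ₂` gives the
Wasserstein condition.

`P_p(X)` is closed under `+_r`: Radon measures are exactly the measures that are inner regular
with respect to compact sets, a class stable under sums and scalings, and a finite `p`-th moment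
about one point is finite about every point since `(a + b)^p ≤ 2^(p-1) (a^p + b^p)`. The
barycentric laws are identities between the coefficients of `μ`, `ν`, `ω`.
-/

open Set

section Coupling

variable {X : Type*} [MeasurableSpace X]

theorem IsCoupling.prod (μ ν : Measure X) [IsProbabilityMeasure μ] [IsProbabilityMeasure ν] :
    IsCoupling (μ.prod ν) μ ν :=
  ⟨by simp [Measure.map_fst_prod], by simp [Measure.map_snd_prod]⟩

theorem IsCoupling.smul_add_smul {γ₁ γ₂ : Measure (X × X)} {μ μ' ν ν' : Measure X}
    (h₁ : IsCoupling γ₁ μ μ') (h₂ : IsCoupling γ₂ ν ν') (a b : ℝ≥0∞) :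
    IsCoupling (a • γ₁ + b • γ₂) (a • μ + b • ν) (a • μ' + b • ν') := by
  constructor
  · rw [Measure.map_add _ _ measurable_fst, Measure.map_smul, Measure.map_smul, h₁.1, h₂.1]
  · rw [Measure.map_add _ _ measurable_snd, Measure.map_smul, Measure.map_smul, h₁.2, h₂.2]

def transportCost (c : X × X → ℝ≥0∞) (μ ν : Measure X) : ℝ≥0∞ :=
  ⨅ (γ : Measure (X × X)) (_ : IsCoupling γ μ ν), ∫⁻ z, c z ∂γ

theorem transportCost_smul_add_smul_le (c : X × X → ℝ≥0∞) {a b : ℝ≥0∞} (ha : a ≠ ∞)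
    (hb : b ≠ ∞) {μ μ' ν ν' : Measure X} (hμ : ∃ γ, IsCoupling γ μ μ')
    (hν : ∃ γ, IsCoupling γ ν ν') :
    transportCost c (a • μ + b • ν) (a • μ' + b • ν')
      ≤ a * transportCost c μ μ' + b * transportCost c ν ν' := by
  have : Nonempty {γ // IsCoupling γ μ μ'} := nonempty_subtype.2 hμ
  have : Nonempty {γ // IsCoupling γ ν ν'} := nonempty_subtype.2 hν
  simp only [transportCost, iInf_subtype']
  rw [ENNReal.mul_iInf (absurd · ha), ENNReal.mul_iInf (absurd · hb), ENNReal.iInf_add]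
  simp only [ENNReal.add_iInf]
  refine le_iInf₂ fun γ₁ γ₂ => ?_
  calc ⨅ γ : {γ // IsCoupling γ (a • μ + b • ν) (a • μ' + b • ν')}, ∫⁻ z, c z ∂γ.1
      ≤ ∫⁻ z, c z ∂(a • γ₁.1 + b • γ₂.1) := iInf_le_of_le ⟨_, γ₁.2.smul_add_smul γ₂.2 a b⟩ le_rfl
    _ = a * ∫⁻ z, c z ∂γ₁.1 + b * ∫⁻ z, c z ∂γ₂.1 := by
      rw [lintegral_add_measure, lintegral_smul_measure, lintegral_smul_measure, smul_eq_mul,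
        smul_eq_mul]

end Coupling

section Wasserstein

variable {X : Type*} [PseudoEMetricSpace X] [MeasurableSpace X] {p : ℝ}

theorem Wp_rpow (hp : p ≠ 0) (μ ν : Measure X) :
    Wp p μ ν ^ p = transportCost (fun z => edist z.1 z.2 ^ p) μ ν := by
  rw [Wp, ← ENNReal.rpow_mul, one_div_mul_cancel hp, ENNReal.rpow_one, transportCost]

theorem Wp_rpow_mcomb_le (hp : p ≠ 0) (μ μ' ν ν' : Measure X) [IsProbabilityMeasure μ]
    [IsProbabilityMeasure μ'] [IsProbabilityMeasure ν] [IsProbabilityMeasure ν'] (r : ℝ) :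
    Wp p (mcomb r μ ν) (mcomb r μ' ν') ^ p
      ≤ ENNReal.ofReal r * Wp p μ μ' ^ p + ENNReal.ofReal (1 - r) * Wp p ν ν' ^ p := by
  simp only [Wp_rpow hp]
  exact transportCost_smul_add_smul_le _ ENNReal.ofReal_ne_top ENNReal.ofReal_ne_top
    ⟨_, IsCoupling.prod μ μ'⟩ ⟨_, IsCoupling.prod ν ν'⟩

end Wasserstein

section Closure

variable {X : Type*} [MeasurableSpace X]

theorem isRadon_iff_innerRegular [TopologicalSpace X] {μ : Measure X} :
    IsRadon μ ↔ μ.InnerRegular := by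
  refine ⟨fun h => ⟨fun U hU r hr => ?_⟩, fun h B hB => ?_⟩
  · rw [h U hU] at hr
    obtain ⟨K, hK, hKU, hrK⟩ := by simpa only [lt_iSup_iff, exists_prop] using hr
    exact ⟨K, hKU, hK, hrK⟩
  · rw [hB.measure_eq_iSup_isCompact μ]
    exact iSup_congr fun K => iSup_comm

theorem isProbabilityMeasure_mcomb {r : ℝ} (hr : r ∈ Icc (0 : ℝ) 1) (μ ν : Measure X)
    [IsProbabilityMeasure μ] [IsProbabilityMeasure ν] : IsProbabilityMeasure (mcomb r μ ν) :=
  ⟨by simp [mcomb, ← ENNReal.ofReal_add hr.1 (sub_nonneg.2 hr.2)]⟩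

theorem HasFiniteMoment.smul [PseudoEMetricSpace X] {p : ℝ} {μ : Measure X}
    (h : HasFiniteMoment p μ) {c : ℝ≥0∞} (hc : c ≠ ∞) : HasFiniteMoment p (c • μ) := by
  obtain ⟨x, hx⟩ := h
  exact ⟨x, by rw [lintegral_smul_measure]; exact ENNReal.mul_ne_top hc hx⟩

variable [PseudoMetricSpace X] {p : ℝ}

theorem HasFiniteMoment.lintegral_edist_rpow_ne_top (hp : 1 ≤ p) {μ : Measure X}
    [IsFiniteMeasure μ] (h : HasFiniteMoment p μ) (x : X) : ∫⁻ y, edist x y ^ p ∂μ ≠ ∞ := by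
  obtain ⟨x₀, h₀⟩ := h
  have hle (y : X) : edist x y ^ p ≤ 2 ^ (p - 1) * (edist x x₀ ^ p + edist x₀ y ^ p) :=
    (ENNReal.rpow_le_rpow (edist_triangle x x₀ y) (by linarith)).trans
      (ENNReal.rpow_add_le_mul_rpow_add_rpow _ _ hp)
  refine ne_top_of_le_ne_top ?_ (lintegral_mono hle)
  rw [lintegral_const_mul' _ _ (by finiteness), lintegral_add_left measurable_const,
    lintegral_const]
  have : edist x x₀ ^ p ≠ ∞ := ENNReal.rpow_ne_top_of_nonneg (by linarith) (edist_ne_top x x₀)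
  finiteness

theorem HasFiniteMoment.add (hp : 1 ≤ p) {μ ν : Measure X} [IsFiniteMeasure ν]
    (hμ : HasFiniteMoment p μ) (hν : HasFiniteMoment p ν) : HasFiniteMoment p (μ + ν) := by
  obtain ⟨x, hx⟩ := hμ
  exact ⟨x, by
    rw [lintegral_add_measure]
    exact ENNReal.add_ne_top.2 ⟨hx, hν.lintegral_edist_rpow_ne_top hp x⟩⟩

end Closure

section Pp

variable {X : Type*} [MetricSpace X] [MeasurableSpace X] {p : ℝ}

theorem inPp_mcomb (hp : 1 ≤ p) {μ ν : Measure X} (hμ : InPp p μ) (hν : InPp p ν) {r : ℝ}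
    (hr : r ∈ Icc (0 : ℝ) 1) : InPp p (mcomb r μ ν) := by
  obtain ⟨hμP, hμR, hμM⟩ := hμ
  obtain ⟨hνP, hνR, hνM⟩ := hν
  have := isRadon_iff_innerRegular.1 hμR
  have := isRadon_iff_innerRegular.1 hνR
  have := ν.smul_finite (ENNReal.ofReal_ne_top (r := 1 - r))
  refine ⟨isProbabilityMeasure_mcomb hr μ ν, isRadon_iff_innerRegular.2 ?_,
    (hμM.smul ENNReal.ofReal_ne_top).add hp (hνM.smul ENNReal.ofReal_ne_top)⟩
  unfold mcomb
  infer_instance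

end Pp

section Laws

variable {X : Type*} [MeasurableSpace X]

theorem mcomb_one (μ ν : Measure X) : mcomb 1 μ ν = μ := by
  simp [mcomb]

theorem mcomb_self {r : ℝ} (hr : r ∈ Icc (0 : ℝ) 1) (μ : Measure X) : mcomb r μ μ = μ := by
  rw [mcomb, ← add_smul, ← ENNReal.ofReal_add hr.1 (sub_nonneg.2 hr.2), add_sub_cancel,
    ENNReal.ofReal_one, one_smul]

theorem mcomb_comm (r : ℝ) (μ ν : Measure X) : mcomb r μ ν = mcomb (1 - r) ν μ := by
  rw [mcomb, mcomb, add_comm, sub_sub_cancel]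

theorem mcomb_assoc {q r : ℝ} (hr : 0 ≤ r) (hqr : q * r < 1) (μ ν ω : Measure X) :
    mcomb r (mcomb q μ ν) ω = mcomb (q * r) μ (mcomb ((r - q * r) / (1 - q * r)) ν ω) := by
  have hpos : 0 < 1 - q * r := sub_pos.2 hqr
  have hμ : ENNReal.ofReal r * ENNReal.ofReal q = ENNReal.ofReal (q * r) := by
    rw [← ENNReal.ofReal_mul hr, mul_comm]
  have hν : ENNReal.ofReal r * ENNReal.ofReal (1 - q)
      = ENNReal.ofReal (1 - q * r) * ENNReal.ofReal ((r - q * r) / (1 - q * r)) := by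
    rw [← ENNReal.ofReal_mul hr, ← ENNReal.ofReal_mul hpos.le, mul_div_cancel₀ _ hpos.ne']
    ring_nf
  have hω : ENNReal.ofReal (1 - r)
      = ENNReal.ofReal (1 - q * r) * ENNReal.ofReal (1 - (r - q * r) / (1 - q * r)) := by
    rw [← ENNReal.ofReal_mul hpos.le, mul_one_sub, mul_div_cancel₀ _ hpos.ne']
    ring_nf
  simp only [mcomb, smul_add, smul_smul]
  rw [hμ, hν, hω, add_assoc]

end Laws

theorem pp_is_wasserstein_algebra_general
    {X : Type*} [MetricSpace X] [MeasurableSpace X]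
    {p : ℝ} (hp : 1 ≤ p) :
    (∀ μ μ' ν ν' : Measure X, InPp p μ → InPp p μ' → InPp p ν → InPp p ν' →
      ∀ r ∈ Set.Icc (0 : ℝ) 1,
        Wp p (mcomb r μ ν) (mcomb r μ' ν') ^ p
          ≤ ENNReal.ofReal r * Wp p μ μ' ^ p
            + ENNReal.ofReal (1 - r) * Wp p ν ν' ^ p) ∧
    (∀ μ ν : Measure X, InPp p μ → InPp p ν → ∀ r ∈ Set.Icc (0 : ℝ) 1,
      InPp p (mcomb r μ ν)) ∧
    (∀ μ ν : Measure X, InPp p μ → InPp p ν → mcomb 1 μ ν = μ) ∧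
    (∀ μ : Measure X, InPp p μ → ∀ r ∈ Set.Icc (0 : ℝ) 1, mcomb r μ μ = μ) ∧
    (∀ μ ν : Measure X, InPp p μ → InPp p ν → ∀ r ∈ Set.Icc (0 : ℝ) 1,
      mcomb r μ ν = mcomb (1 - r) ν μ) ∧
    (∀ μ ν ω : Measure X, InPp p μ → InPp p ν → InPp p ω →
      ∀ q ∈ Set.Icc (0 : ℝ) 1, ∀ r ∈ Set.Icc (0 : ℝ) 1, q < 1 → r < 1 →
        mcomb r (mcomb q μ ν) ω
          = mcomb (q * r) μ (mcomb ((r - q * r) / (1 - q * r)) ν ω)) := by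
  refine ⟨fun μ μ' ν ν' hμ hμ' hν hν' r _ => ?_, fun μ ν hμ hν r hr => inPp_mcomb hp hμ hν hr,
    fun μ ν _ _ => mcomb_one μ ν, fun μ _ r hr => mcomb_self hr μ,
    fun μ ν _ _ r _ => mcomb_comm r μ ν, fun μ ν ω _ _ _ q hq r hr hq1 _ => ?_⟩
  · have := hμ.1; have := hμ'.1; have := hν.1; have := hν'.1
    exact Wp_rpow_mcomb_le (by linarith) μ μ' ν ν' r
  · have hqr : q * r < 1 := (mul_le_of_le_one_right hq.1 hr.2).trans_lt hq1
    exact mcomb_assoc hr.1 hqr μ ν ω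

/-- `P_p(X)` with the pointwise convex combinations is a Wasserstein
barycentric algebra of order `p`: the Wasserstein condition
`W_p(μ +_r ν, μ' +_r ν')^p ≤ r·W_p(μ,μ')^p + (1−r)·W_p(ν,ν')^p` holds,
`P_p(X)` is closed under the operations, and the barycentric laws
(B1), (B2), (SC), (SA) hold. -/
theorem pp_is_wasserstein_algebra
    {X : Type*} [MetricSpace X] [MeasurableSpace X] [BorelSpace X]
    {p : ℝ} (hp : 1 ≤ p) :
    (∀ μ μ' ν ν' : Measure X, InPp p μ → InPp p μ' → InPp p ν → InPp p ν' →
      ∀ r ∈ Set.Icc (0 : ℝ) 1,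
        Wp p (mcomb r μ ν) (mcomb r μ' ν') ^ p
          ≤ ENNReal.ofReal r * Wp p μ μ' ^ p
            + ENNReal.ofReal (1 - r) * Wp p ν ν' ^ p) ∧
    (∀ μ ν : Measure X, InPp p μ → InPp p ν → ∀ r ∈ Set.Icc (0 : ℝ) 1,
      InPp p (mcomb r μ ν)) ∧
    (∀ μ ν : Measure X, InPp p μ → InPp p ν → mcomb 1 μ ν = μ) ∧
    (∀ μ : Measure X, InPp p μ → ∀ r ∈ Set.Icc (0 : ℝ) 1, mcomb r μ μ = μ) ∧
    (∀ μ ν : Measure X, InPp p μ → InPp p ν → ∀ r ∈ Set.Icc (0 : ℝ) 1,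
      mcomb r μ ν = mcomb (1 - r) ν μ) ∧
    (∀ μ ν ω : Measure X, InPp p μ → InPp p ν → InPp p ω →
      ∀ q ∈ Set.Icc (0 : ℝ) 1, ∀ r ∈ Set.Icc (0 : ℝ) 1, q < 1 → r < 1 →
        mcomb r (mcomb q μ ν) ω
          = mcomb (q * r) μ (mcomb ((r - q * r) / (1 - q * r)) ν ω)) :=
  pp_is_wasserstein_algebra_general hp
end
end
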